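/- Fix an integer n ≥ 2. The coefficients α_{j,i} satisfy the closed form α_{n−1,i} = (−1)^i (i+1) for all i = 0, …, n−2. -/

import Mathlib

open Matrix

/-- The coefficients `α_{j,i}` (`j` is 1-based) for fixed order `n`, defined by the
recursion `α_{j,0} = 1`, `α_{n,i} = (-1)^i`, `α_{j,i} = α_{j+1,i} - α_{j,i-1}`. -/
def alphaCoef (n : ℕ) (j i : ℕ) : ℤ :=
  if n ≤ j then (-1) ^ i
  else if i = 0 then 1
  else alphaCoef n (j + 1) i - alphaCoef n j (i - 1)
termination_by (n - j, i)
decreasing_by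
  · apply Prod.Lex.left; omega
  · apply Prod.Lex.right' <;> omega

/-- The modulating-function-based transformation matrix `T_n(μ(t))`, whose (1-based)
`(j,k)` entry is `α_{j,j-k} μ^{(j-k)}(t)` for `k ≤ j` and `0` otherwise. -/
noncomputable def Tmat (n : ℕ) (μ : ℝ → ℝ) (t : ℝ) : Matrix (Fin n) (Fin n) ℝ :=
  Matrix.of fun j k : Fin n =>
    if (k : ℕ) ≤ (j : ℕ) then
      (alphaCoef n ((j : ℕ) + 1) ((j : ℕ) - (k : ℕ)) : ℝ) * iteratedDeriv ((j : ℕ) - (k : ℕ)) μ t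
    else 0

/-- `T_n(μ^{(1)}(t))`: the matrix obtained from `T_n` by shifting all derivative
orders up by one; its (1-based) `(j,k)` entry is `α_{j,j-k} μ^{(j-k+1)}(t)` for `k ≤ j`. -/
noncomputable def TmatShift (n : ℕ) (μ : ℝ → ℝ) (t : ℝ) : Matrix (Fin n) (Fin n) ℝ :=
  Matrix.of fun j k : Fin n =>
    if (k : ℕ) ≤ (j : ℕ) then
      (alphaCoef n ((j : ℕ) + 1) ((j : ℕ) - (k : ℕ)) : ℝ) * iteratedDeriv ((j : ℕ) - (k : ℕ) + 1) μ t
    else 0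

/-- The Brunovsky (nilpotent shift) matrix `A`: ones on the superdiagonal, zeros elsewhere. -/
def Amat (n : ℕ) : Matrix (Fin n) (Fin n) ℝ :=
  Matrix.of fun j k : Fin n => if (k : ℕ) = (j : ℕ) + 1 then 1 else 0

/-- First standard basis vector `e₁` of `ℝⁿ`. -/
def e1vec (n : ℕ) : Fin n → ℝ := fun k => if (k : ℕ) = 0 then 1 else 0

/-- Last standard basis vector `B₀ = (0,…,0,1)ᵀ` of `ℝⁿ`. -/
def B0vec (n : ℕ) : Fin n → ℝ := fun k => if (k : ℕ) = n - 1 then 1 else 0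

/-- The vector `B_α(t)` whose (1-based) `j`-th entry is `(-1)^(j-1) C(n,j) μ^{(j)}(t)`. -/
noncomputable def Balpha (n : ℕ) (μ : ℝ → ℝ) (t : ℝ) : Fin n → ℝ :=
  fun j => (-1 : ℝ) ^ (j : ℕ) * (n.choose ((j : ℕ) + 1)) * iteratedDeriv ((j : ℕ) + 1) μ t

theorem alphaCoef_of_le {n j : ℕ} (h : n ≤ j) (i : ℕ) : alphaCoef n j i = (-1) ^ i := by
  rw [alphaCoef, if_pos h]

@[simp]
theorem alphaCoef_zero (n j : ℕ) : alphaCoef n j 0 = 1 := by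
  rw [alphaCoef]
  split_ifs <;> simp_all

theorem alphaCoef_succ {n j : ℕ} (h : j < n) (i : ℕ) :
    alphaCoef n j (i + 1) = alphaCoef n (j + 1) (i + 1) - alphaCoef n j i := by
  rw [alphaCoef, if_neg (by omega), if_neg i.succ_ne_zero, Nat.add_sub_cancel]

theorem alphaCoef_self_succ (j i : ℕ) :
    alphaCoef (j + 1) j i = (-1) ^ i * ((i : ℤ) + 1) := by
  induction i with
  | zero => simp
  | succ i ih =>
    rw [alphaCoef_succ j.lt_succ_self, alphaCoef_of_le le_rfl, ih]
    push_cast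
    ring

theorem alphaCoef_pred_general (n : ℕ) :
    ∀ i ≤ n - 2, alphaCoef n (n - 1) i = (-1) ^ i * ((i : ℤ) + 1) := by
  intro i hi
  rcases n with _ | n
  · obtain rfl : i = 0 := by omega
    simp
  · exact alphaCoef_self_succ n i

/-- for `n ≥ 2`, `α_{n-1,i} = (-1)^i (i+1)` for all `i = 0, …, n-2`. -/
theorem alphaCoef_pred (n : ℕ) (hn : 2 ≤ n) :
    ∀ i ≤ n - 2, alphaCoef n (n - 1) i = (-1) ^ i * ((i : ℤ) + 1) :=
  alphaCoef_pred_general n
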